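/- Let $F:\mathcal{U}\to\mathcal{V}$ be a complex box mapping satisfying the no permutation condition, and suppose $\mathcal{U}$ has only finitely many connected components. Then the non-escaping set $K(F) = \bigcap_{n\ge 0} F^{-n}(\mathcal{V})$ is compact. -/
import Mathlib


open Set Topology Filter MeasureTheory

noncomputable section

structure ComplexBoxMapping : Type where
  U : Set ℂ
  V : Set ℂ
  F : ℂ → ℂ
  isOpen_U : IsOpen U
  isOpen_V : IsOpen V
  subset_UV : U ⊆ V
  mapsTo : Set.MapsTo F U V
  holo : DifferentiableOn ℂ F U
  crit_finite : {z | z ∈ U ∧ deriv F z = 0}.Finite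
  components_V_finite : {C | ∃ x ∈ V, C = connectedComponentIn V x}.Finite
  components_V_simplyConnected : ∀ x ∈ V, SimplyConnectedSpace (connectedComponentIn V x)
  components_V_disjoint_closures : ∀ x ∈ V, ∀ y ∈ V,
      connectedComponentIn V x ≠ connectedComponentIn V y →
      closure (connectedComponentIn V x) ∩ closure (connectedComponentIn V y) = ∅
  components_U_simplyConnected : ∀ x ∈ U, SimplyConnectedSpace (connectedComponentIn U x)
  components_U : ∀ x ∈ U,
      connectedComponentIn U x = connectedComponentIn V x ∨
      (IsCompact (closure (connectedComponentIn U x)) ∧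
        closure (connectedComponentIn U x) ⊆ connectedComponentIn V x)
  components_U_disjoint_closures : ∀ x ∈ U, ∀ y ∈ U,
      connectedComponentIn U x ≠ connectedComponentIn U y →
      closure (connectedComponentIn U x) ∩ closure (connectedComponentIn U y) = ∅
  maps_components : ∀ x ∈ U, F '' connectedComponentIn U x = connectedComponentIn V (F x)
  proper_components : ∀ x ∈ U, ∀ K, K ⊆ connectedComponentIn V (F x) → IsCompact K →
      IsCompact (connectedComponentIn U x ∩ F ⁻¹' K)

namespace ComplexBoxMapping

/-- The set of points whose first `n` iterates remain in the domain and whose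
`n`-th iterate lies in `V`; the puzzle pieces of depth `n` are its connected components. -/
def stays (B : ComplexBoxMapping) (n : ℕ) : Set ℂ :=
  {z | (∀ k < n, B.F^[k] z ∈ B.U) ∧ B.F^[n] z ∈ B.V}

/-- `P` is a puzzle piece of depth `n`: a connected component of `F^{-n}(V)`. -/
def IsPuzzlePiece (B : ComplexBoxMapping) (n : ℕ) (P : Set ℂ) : Prop :=
  ∃ z ∈ B.stays n, P = connectedComponentIn (B.stays n) z

/-- The non-escaping (filled Julia) set `K(F)`. -/
def nonEscaping (B : ComplexBoxMapping) : Set ℂ := {z | ∀ n, B.F^[n] z ∈ B.U}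

/-- The no permutation condition. -/
def NoPermutation (B : ComplexBoxMapping) : Prop :=
  ∀ x ∈ B.U, ∃ n, ¬ (B.F^[n] '' connectedComponentIn B.U x ⊆ B.U)

end ComplexBoxMapping

namespace ComplexBoxMapping

/-- A component of `U` is *good* at `w` if its closure is compact and contained in the
`V`-component of `w`. -/
def Good (B : ComplexBoxMapping) (w : ℂ) : Prop :=
  IsCompact (closure (connectedComponentIn B.U w)) ∧
    closure (connectedComponentIn B.U w) ⊆ connectedComponentIn B.V w

/-- Nested puzzle set built from an itinerary of sets. -/
def pieceF (B : ComplexBoxMapping) : ℕ → (ℕ → Set ℂ) → Set ℂ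
  | 0, f => closure (f 0)
  | (n + 1), f => f 0 ∩ B.F ⁻¹' B.pieceF n (fun k => f (k + 1))

/-- The itinerary of a point: the `U`-components of its iterates. -/
def itin (B : ComplexBoxMapping) (z : ℂ) (k : ℕ) : Set ℂ :=
  connectedComponentIn B.U (B.F^[k] z)

/-- The nested puzzle set of a point. -/
def piece (B : ComplexBoxMapping) (n : ℕ) (z : ℂ) : Set ℂ := B.pieceF n (B.itin z)

lemma pieceF_congr (B : ComplexBoxMapping) :
    ∀ (n : ℕ) (f g : ℕ → Set ℂ), (∀ k ≤ n, f k = g k) → B.pieceF n f = B.pieceF n g := by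
  intro n
  induction n with
  | zero => intro f g h; simp [pieceF, h 0 le_rfl]
  | succ n ih =>
    intro f g h
    simp only [pieceF, h 0 (Nat.zero_le _)]
    rw [ih (fun k => f (k + 1)) (fun k => g (k + 1)) (fun k hk => h (k + 1) (by omega))]

lemma itin_shift (B : ComplexBoxMapping) (z : ℂ) :
    (fun k => B.itin z (k + 1)) = B.itin (B.F z) := by
  funext k
  simp [itin, Function.iterate_succ_apply]

lemma piece_succ (B : ComplexBoxMapping) (n : ℕ) (z : ℂ) :
    B.piece (n + 1) z = connectedComponentIn B.U z ∩ B.F ⁻¹' B.piece n (B.F z) := by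
  simp only [piece, pieceF, itin_shift]
  rfl

lemma piece_zero (B : ComplexBoxMapping) (z : ℂ) :
    B.piece 0 z = closure (connectedComponentIn B.U z) := rfl

lemma mem_piece (B : ComplexBoxMapping) :
    ∀ (n : ℕ) (z : ℂ), (∀ k ≤ n, B.F^[k] z ∈ B.U) → z ∈ B.piece n z := by
  intro n
  induction n with
  | zero =>
    intro z hz
    exact subset_closure (mem_connectedComponentIn (hz 0 le_rfl))
  | succ n ih =>
    intro z hz
    rw [piece_succ]
    refine ⟨mem_connectedComponentIn (hz 0 (Nat.zero_le _)), ih (B.F z) fun k hk => ?_⟩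
    rw [← Function.iterate_succ_apply]
    exact hz (k + 1) (by omega)

lemma piece_orbit (B : ComplexBoxMapping) :
    ∀ (n : ℕ) (z w : ℂ), w ∈ B.piece n z → ∀ k < n, B.F^[k] w ∈ B.U := by
  intro n
  induction n with
  | zero => intro z w _ k hk; omega
  | succ n ih =>
    intro z w hw k hk
    rw [piece_succ] at hw
    match k with
    | 0 => exact connectedComponentIn_subset _ _ hw.1
    | (k + 1) =>
      rw [Function.iterate_succ_apply]
      exact ih (B.F z) (B.F w) hw.2 k (by omega)

lemma piece_subset_V (B : ComplexBoxMapping) :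
    ∀ (n : ℕ) (z : ℂ), (∀ k ≤ n, B.F^[k] z ∈ B.U) → B.Good (B.F^[n] z) →
      B.piece n z ⊆ connectedComponentIn B.V z := by
  intro n
  match n with
  | 0 =>
    intro z _ hg
    rw [piece_zero]
    simpa using hg.2
  | (n + 1) =>
    intro z hz _
    rw [piece_succ]
    exact (Set.inter_subset_left).trans (connectedComponentIn_mono z B.subset_UV)

lemma isCompact_piece (B : ComplexBoxMapping) :
    ∀ (n : ℕ) (z : ℂ), (∀ k ≤ n, B.F^[k] z ∈ B.U) → B.Good (B.F^[n] z) →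
      IsCompact (B.piece n z) := by
  intro n
  induction n with
  | zero =>
    intro z _ hg
    rw [piece_zero]
    simpa using hg.1
  | succ n ih =>
    intro z hz hg
    have hz' : ∀ k ≤ n, B.F^[k] (B.F z) ∈ B.U := fun k hk => by
      rw [← Function.iterate_succ_apply]
      exact hz (k + 1) (by omega)
    have hg' : B.Good (B.F^[n] (B.F z)) := by
      rwa [← Function.iterate_succ_apply]
    have hK := ih (B.F z) hz' hg'
    have hsub := B.piece_subset_V n (B.F z) hz' hg'
    rw [piece_succ]
    exact B.proper_components z (hz 0 (Nat.zero_le _)) _ hsub hK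

/-- The window lemma: under no permutation, every orbit that stays in `U` visits a good
component within any window of length `card + 1`. -/
lemma window (B : ComplexBoxMapping) (hnp : B.NoPermutation)
    (hfin : {C | ∃ x ∈ B.U, C = connectedComponentIn B.U x}.Finite)
    (z : ℂ) (hz : ∀ k, B.F^[k] z ∈ B.U) (m : ℕ) :
    ∃ n, m < n ∧ n ≤ m + (hfin.toFinset.card + 1) ∧ B.Good (B.F^[n] z) := by
  classical
  set L := hfin.toFinset.card + 1 with hLdef
  by_contra hcon
  push_neg at hcon
  have htype1 : ∀ n, m < n → n ≤ m + L → B.itin z n = connectedComponentIn B.V (B.F^[n] z) :=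
    fun n h1 h2 => (B.components_U _ (hz n)).resolve_right (hcon n h1 h2)
  have hdet : ∀ n, m < n → n + 1 ≤ m + L → B.F '' B.itin z n = B.itin z (n + 1) := by
    intro n h1 h2
    rw [htype1 (n + 1) (by omega) h2]
    show B.F '' connectedComponentIn B.U (B.F^[n] z) = _
    rw [B.maps_components _ (hz n), Function.iterate_succ_apply']
  have hmap : ∀ n ∈ Finset.Icc (m + 1) (m + L), B.itin z n ∈ hfin.toFinset :=
    fun n _ => hfin.mem_toFinset.2 ⟨_, hz n, rfl⟩
  have hcard : hfin.toFinset.card < (Finset.Icc (m + 1) (m + L)).card := by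
    rw [Nat.card_Icc]; omega
  obtain ⟨a, ha, b, hb, hab, heq⟩ := Finset.exists_ne_map_eq_of_card_lt_of_maps_to hcard hmap
  simp only [Finset.mem_Icc] at ha hb
  obtain ⟨a, b, ha, hb, hlt, heq⟩ :
      ∃ a b, (m + 1 ≤ a ∧ a ≤ m + L) ∧ (m + 1 ≤ b ∧ b ≤ m + L) ∧ a < b ∧
        B.itin z a = B.itin z b := by
    rcases hab.lt_or_gt with h | h
    · exact ⟨a, b, ha, hb, h, heq⟩
    · exact ⟨b, a, hb, ha, h, heq.symm⟩
  have key : ∀ j, ∃ n, a ≤ n ∧ n < b ∧ B.F^[j] '' B.itin z a = B.itin z n := by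
    intro j
    induction j with
    | zero => exact ⟨a, le_rfl, hlt, by simp⟩
    | succ j ih =>
      obtain ⟨n, h1, h2, h3⟩ := ih
      have himg : B.F^[j + 1] '' B.itin z a = B.F '' B.itin z n := by
        rw [Function.iterate_succ', Set.image_comp, h3]
      have hd : B.F '' B.itin z n = B.itin z (n + 1) := hdet n (by omega) (by omega)
      rcases eq_or_lt_of_le (Nat.succ_le_of_lt h2) with he | he
      · exact ⟨a, le_rfl, hlt, by rw [himg, hd, show n + 1 = b from he, ← heq]⟩
      · exact ⟨n + 1, by omega, he, himg.trans hd⟩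
  obtain ⟨j, hj⟩ := hnp (B.F^[a] z) (hz a)
  obtain ⟨n, _, _, h3⟩ := key j
  refine hj ?_
  show B.F^[j] '' B.itin z a ⊆ B.U
  rw [h3]
  exact connectedComponentIn_subset _ _

end ComplexBoxMapping


/-- If a complex box mapping satisfies the no permutation condition and `𝒰` has only
finitely many connected components, then the non-escaping set `K(F)` is compact. -/
theorem stmt_3 (B : ComplexBoxMapping) (hnp : B.NoPermutation)
    (hfin : {C | ∃ x ∈ B.U, C = connectedComponentIn B.U x}.Finite) :
    IsCompact B.nonEscaping := by
  classical
  set L := hfin.toFinset.card + 1 with hLdef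
  have key : ∀ m : ℕ, ∃ Q : Set ℂ,
      IsCompact Q ∧ B.nonEscaping ⊆ Q ∧ Q ⊆ {w | ∀ k ≤ m, B.F^[k] w ∈ B.U} := by
    intro m
    set ext : (Fin (m + L + 1) → Set ℂ) → ℕ → Set ℂ :=
      fun f k => if h : k < m + L + 1 then f ⟨k, h⟩ else ∅ with hext
    set Fam : Set (Set ℂ) :=
      (fun p : ℕ × (Fin (m + L + 1) → Set ℂ) => B.pieceF p.1 (ext p.2)) ''
        ((Set.Icc (m + 1) (m + L)) ×ˢ
          {f | ∀ i, f i ∈ {C | ∃ x ∈ B.U, C = connectedComponentIn B.U x}}) with hFam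
    set Fam' : Set (Set ℂ) :=
      {S ∈ Fam | IsCompact S ∧ S ⊆ {w | ∀ k ≤ m, B.F^[k] w ∈ B.U}} with hFam'
    have hFamFin : Fam.Finite :=
      Set.Finite.image _ ((Set.finite_Icc _ _).prod (Set.Finite.pi' fun _ => hfin))
    have hFam'Fin : Fam'.Finite := hFamFin.subset (Set.sep_subset _ _)
    refine ⟨⋃₀ Fam', ?_, ?_, ?_⟩
    · exact hFam'Fin.isCompact_sUnion fun S hS => hS.2.1
    · intro z hz
      have hz' : ∀ k, B.F^[k] z ∈ B.U := hz
      obtain ⟨n, hn1, hn2, hgood⟩ := B.window hnp hfin z hz' m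
      have hzorb : ∀ k ≤ n, B.F^[k] z ∈ B.U := fun k _ => hz' k
      refine Set.mem_sUnion.2 ⟨B.piece n z, ?_, B.mem_piece n z hzorb⟩
      refine ⟨?_, B.isCompact_piece n z hzorb hgood, fun w hw k hk =>
        B.piece_orbit n z w hw k (by omega)⟩
      refine ⟨(n, fun i => B.itin z i), ⟨⟨by omega, hn2⟩, fun i => ⟨_, hz' i, rfl⟩⟩, ?_⟩
      refine (B.pieceF_congr n _ _ fun k hk => ?_).symm
      simp only [hext]
      rw [dif_pos (by omega : k < m + L + 1)]
    · intro w hw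
      obtain ⟨S, hS, hwS⟩ := hw
      exact hS.2.2 hwS
  choose Q hQc hQ1 hQ2 using key
  have hKeq : B.nonEscaping = ⋂ m, Q m := by
    apply Set.Subset.antisymm
    · exact Set.subset_iInter hQ1
    · intro z hz n
      exact hQ2 n (Set.mem_iInter.1 hz n) n le_rfl
  rw [hKeq]
  exact IsCompact.of_isClosed_subset (hQc 0)
    (isClosed_iInter fun m => (hQc m).isClosed) (Set.iInter_subset _ 0)
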